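/- arXiv:2009.09353 — 3 statements merged into one kernel-verified Lean document; each statement's English description precedes it below -/
import Mathlib

section
/- Discrete Gronwall inequality: let a_k, b_k, c_k, d_k, γ_k, Δt_k be nonnegative real numbers satisfying a_{k+1} - a_k + b_{k+1}Δt_{k+1} + c_{k+1}Δt_{k+1} - c_kΔt_k ≤ a_k d_k Δt_k + γ_{k+1}Δt_{k+1} for all 0 ≤ k ≤ m. Then a_{m+1} + Σ_{k=0}^{m+1} b_k Δt_k ≤ exp(Σ_{k=0}^{m} d_k Δt_k) · (a_0 + (b_0 + c_0)Δt_0 + Σ_{k=1}^{m+1} γ_k Δt_k). -/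
/-!
The quantity `E k = a k + ∑_{j ≤ k} b j Δt j + c k Δt k` dominates `a k`, so the hypothesis turns
into the linear recurrence `E (k+1) ≤ (1 + d k Δt k) E k + γ (k+1) Δt (k+1)`. Unrolling it and
bounding `∏ (1 + d k Δt k) ≤ exp (∑ d k Δt k)` gives the claim, since `E 0` is the initial datum
and `E (m+1)` dominates the left-hand side.
-/

namespace GronwallPaper

open Finset Real

theorem le_exp_sum_mul_of_le_one_add_mul_add {x r g : ℕ → ℝ} {n : ℕ} (hx₀ : 0 ≤ x 0)
    (hr : ∀ k, 0 ≤ r k) (hg : ∀ k, 0 ≤ g k)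
    (hstep : ∀ k < n, x (k + 1) ≤ (1 + r k) * x k + g k) :
    x n ≤ exp (∑ k ∈ range n, r k) * (x 0 + ∑ k ∈ range n, g k) := by
  induction n with
  | zero => simp
  | succ n ih =>
    have hR : 0 ≤ ∑ k ∈ range n, r k := sum_nonneg fun k _ => hr k
    have hG : 0 ≤ ∑ k ∈ range n, g k := sum_nonneg fun k _ => hg k
    have hbound : 0 ≤ exp (∑ k ∈ range n, r k) * (x 0 + ∑ k ∈ range n, g k) := by positivity
    have hgrowth : 1 ≤ exp (∑ k ∈ range (n + 1), r k) := one_le_exp (sum_nonneg fun k _ => hr k)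
    calc x (n + 1)
        ≤ (1 + r n) * (exp (∑ k ∈ range n, r k) * (x 0 + ∑ k ∈ range n, g k)) + g n := by
          grw [hstep n n.lt_succ_self, ih fun k hk => hstep k (hk.trans n.lt_succ_self)]
          linarith [hr n]
      _ ≤ exp (r n) * (exp (∑ k ∈ range n, r k) * (x 0 + ∑ k ∈ range n, g k))
            + exp (∑ k ∈ range (n + 1), r k) * g n := by
          gcongr
          · linarith [add_one_le_exp (r n)]
          · exact le_mul_of_one_le_left (hg n) hgrowth
      _ = exp (∑ k ∈ range (n + 1), r k) * (x 0 + ∑ k ∈ range (n + 1), g k) := by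
          rw [sum_range_succ, sum_range_succ, exp_add]
          ring

theorem sum_range_comp_succ_eq_sum_Icc {M : Type*} [AddCommMonoid M] (f : ℕ → M) (n : ℕ) :
    ∑ k ∈ range n, f (k + 1) = ∑ k ∈ Icc 1 n, f k := by
  rw [range_eq_Ico, ← Ico_add_one_right_eq_Icc, sum_Ico_add' f]

def energy (a b c Δt : ℕ → ℝ) (k : ℕ) : ℝ :=
  a k + ∑ j ∈ range (k + 1), b j * Δt j + c k * Δt k

theorem le_energy {a b c Δt : ℕ → ℝ} (hb : ∀ k, 0 ≤ b k) (hc : ∀ k, 0 ≤ c k)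
    (hΔt : ∀ k, 0 ≤ Δt k) (k : ℕ) : a k ≤ energy a b c Δt k := by
  have hS : 0 ≤ ∑ j ∈ range (k + 1), b j * Δt j := sum_nonneg fun j _ => mul_nonneg (hb j) (hΔt j)
  have := mul_nonneg (hc k) (hΔt k)
  unfold energy
  linarith

theorem energy_succ_le {a b c d γ Δt : ℕ → ℝ} (hb : ∀ k, 0 ≤ b k) (hc : ∀ k, 0 ≤ c k)
    (hd : ∀ k, 0 ≤ d k) (hΔt : ∀ k, 0 ≤ Δt k) {k : ℕ}
    (h : a (k + 1) - a k + b (k + 1) * Δt (k + 1) + c (k + 1) * Δt (k + 1) - c k * Δt k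
        ≤ a k * d k * Δt k + γ (k + 1) * Δt (k + 1)) :
    energy a b c Δt (k + 1) ≤
      (1 + d k * Δt k) * energy a b c Δt k + γ (k + 1) * Δt (k + 1) := by
  have hgain : a k * (d k * Δt k) ≤ energy a b c Δt k * (d k * Δt k) :=
    mul_le_mul_of_nonneg_right (le_energy hb hc hΔt k) (mul_nonneg (hd k) (hΔt k))
  unfold energy at hgain ⊢
  rw [sum_range_succ]
  linarith

/-- Discrete Gronwall lemma: if nonnegative reals satisfy
`a_{k+1} - a_k + b_{k+1}Δt_{k+1} + c_{k+1}Δt_{k+1} - c_kΔt_k ≤ a_k d_k Δt_k + γ_{k+1}Δt_{k+1}`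
for all `0 ≤ k ≤ m`, then
`a_{m+1} + Σ_{k=0}^{m+1} b_k Δt_k ≤ exp(Σ_{k=0}^m d_k Δt_k) (a_0 + (b_0+c_0)Δt_0 + Σ_{k=1}^{m+1} γ_k Δt_k)`. -/
theorem discrete_gronwall (a b c d γ Δt : ℕ → ℝ) (m : ℕ)
    (ha : ∀ k, 0 ≤ a k) (hb : ∀ k, 0 ≤ b k) (hc : ∀ k, 0 ≤ c k)
    (hd : ∀ k, 0 ≤ d k) (hγ : ∀ k, 0 ≤ γ k) (hΔt : ∀ k, 0 ≤ Δt k)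
    (h : ∀ k ≤ m,
      a (k + 1) - a k + b (k + 1) * Δt (k + 1) + c (k + 1) * Δt (k + 1) - c k * Δt k
        ≤ a k * d k * Δt k + γ (k + 1) * Δt (k + 1)) :
    a (m + 1) + ∑ k ∈ Finset.range (m + 2), b k * Δt k ≤
      Real.exp (∑ k ∈ Finset.range (m + 1), d k * Δt k) *
        (a 0 + (b 0 + c 0) * Δt 0 + ∑ k ∈ Finset.Icc 1 (m + 1), γ k * Δt k) := by
  have hgronwall := le_exp_sum_mul_of_le_one_add_mul_add (x := energy a b c Δt) (n := m + 1)
    (r := fun k => d k * Δt k) (g := fun k => γ (k + 1) * Δt (k + 1))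
    ((ha 0).trans (le_energy hb hc hΔt 0)) (fun k => mul_nonneg (hd k) (hΔt k))
    (fun k => mul_nonneg (hγ _) (hΔt _))
    (fun k hk => energy_succ_le hb hc hd hΔt (h k (Nat.lt_succ_iff.mp hk)))
  have henergy₀ : energy a b c Δt 0 = a 0 + (b 0 + c 0) * Δt 0 := by
    simp only [energy, zero_add, sum_range_one]
    ring
  rw [henergy₀, sum_range_comp_succ_eq_sum_Icc (fun k => γ k * Δt k)] at hgronwall
  have hlast := mul_nonneg (hc (m + 1)) (hΔt (m + 1))
  unfold energy at hgronwall
  linarith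

end GronwallPaper
end

section
/- The first-order fully decoupled MSAV scheme is unconditionally energy stable: for every n and every Δt > 0, Ẽ^{n+1} - Ẽ^n ≤ -2MΔt‖∇μ^{n+1}‖² - 2νΔt‖∇ũ^{n+1}‖² - (2Δt/T)|q^{n+1}|², where Ẽ^{n+1} = ‖∇φ^{n+1}‖² + γ‖φ^{n+1}‖² + 2|r^{n+1}|² + ‖u^{n+1}‖² + (Δt)²‖∇p^{n+1}‖² + |q^{n+1}|². -/
open MeasureTheory Real

noncomputable section

/-- Points of the two-dimensional domain. -/
abbrev E2 : Type := Fin 2 → ℝ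

/-- Partial derivative in direction `i`. -/
def pd (i : Fin 2) (f : E2 → ℝ) (x : E2) : ℝ :=
  fderiv ℝ f x (Pi.single i 1)

/-- Divergence of a vector field (given by its components). -/
def vdiv (u : Fin 2 → E2 → ℝ) (x : E2) : ℝ := ∑ i, pd i (u i) x

/-- Scalar curl of a planar vector field. -/
def vcurl (u : Fin 2 → E2 → ℝ) (x : E2) : ℝ := pd 0 (u 1) x - pd 1 (u 0) x

/-- Laplacian of a scalar field. -/
def lap (f : E2 → ℝ) (x : E2) : ℝ := ∑ i, pd i (pd i f) x

/-- `i`-th component of the advection term `(u · ∇) v`. -/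
def advect (u v : Fin 2 → E2 → ℝ) (i : Fin 2) (x : E2) : ℝ :=
  ∑ j, u j x * pd j (v i) x

/-- Squared `L²` norm of a scalar field. -/
def sL2sq (f : E2 → ℝ) : ℝ := ∫ x, (f x) ^ 2

/-- Squared `L²` norm of a vector field. -/
def vL2sq (u : Fin 2 → E2 → ℝ) : ℝ := ∫ x, ∑ i, (u i x) ^ 2

/-- Squared `L²` norm of the gradient of a scalar field, `‖∇f‖²`. -/
def gradSq (f : E2 → ℝ) : ℝ := ∫ x, ∑ i, (pd i f x) ^ 2

/-- Squared `L²` norm of the full gradient tensor of a vector field, `‖∇u‖²`. -/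
def vgradSq (u : Fin 2 → E2 → ℝ) : ℝ := ∫ x, ∑ i, ∑ j, (pd j (u i) x) ^ 2

/-- SmoothCS scalar field vanishing near the boundary (compact support). -/
def SmoothCS (f : E2 → ℝ) : Prop := ContDiff ℝ (⊤ : ℕ∞) f ∧ HasCompactSupport f

/-- SmoothCS vector field vanishing near the boundary. -/
def VSmoothCS (u : Fin 2 → E2 → ℝ) : Prop := ∀ i, SmoothCS (u i)

/-- The shifted potential `F(y) = (1/(4ε²))(1-y²)² - (γ/2) y²`. -/
def Fpot (ε γ : ℝ) (y : ℝ) : ℝ := (1 / (4 * ε ^ 2)) * (1 - y ^ 2) ^ 2 - (γ / 2) * y ^ 2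

/-- Its derivative `F'(y) = (1/ε²) y (y² - 1) - γ y`. -/
def Fprime (ε γ : ℝ) (y : ℝ) : ℝ := (1 / ε ^ 2) * y * (y ^ 2 - 1) - γ * y

/-- `E₁(φ) = ∫ F(φ)`. -/
def E1 (ε γ : ℝ) (f : E2 → ℝ) : ℝ := ∫ x, Fpot ε γ (f x)

/-- `√(E₁(φ) + δ)`. -/
def sfac (ε γ δ : ℝ) (f : E2 → ℝ) : ℝ := Real.sqrt (E1 ε γ f + δ)

/-- The first-order fully decoupled MSAV scheme for the
Cahn-Hilliard-Navier-Stokes system (all seven substeps, together with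
smoothness of the discrete fields and positivity of `E₁(φⁿ)+δ`). -/
def IsFirstOrderMSAV (M ν ε γ δ T Δt : ℝ) (φ μ p : ℕ → E2 → ℝ)
    (u ut : ℕ → Fin 2 → E2 → ℝ) (r q : ℕ → ℝ) : Prop :=
  (∀ n, SmoothCS (φ n)) ∧ (∀ n, SmoothCS (μ n)) ∧ (∀ n, SmoothCS (p n)) ∧
  (∀ n, VSmoothCS (u n)) ∧ (∀ n, VSmoothCS (ut n)) ∧
  (∀ n, 0 < E1 ε γ (φ n) + δ) ∧
  -- Cahn-Hilliard step
  (∀ n x, (φ (n + 1) x - φ n x) / Δt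
      + (r (n + 1) / sfac ε γ δ (φ n)) * (∑ j, u n j x * pd j (φ n) x)
      = M * lap (μ (n + 1)) x) ∧
  (∀ n x, μ (n + 1) x = -lap (φ (n + 1)) x + γ * φ (n + 1) x
      + (r (n + 1) / sfac ε γ δ (φ n)) * Fprime ε γ (φ n x)) ∧
  -- SAV step for r
  (∀ n, (r (n + 1) - r n) / Δt = (1 / (2 * sfac ε γ δ (φ n))) *
      ((∫ x, Fprime ε γ (φ n x) * ((φ (n + 1) x - φ n x) / Δt))
        + (∫ x, μ (n + 1) x * ∑ j, u n j x * pd j (φ n) x)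
        - ∫ x, ∑ i, ut (n + 1) i x * (μ n x * pd i (φ n) x))) ∧
  -- momentum step
  (∀ n i x, (ut (n + 1) i x - u n i x) / Δt
      + Real.exp (((n : ℝ) + 1) * Δt / T) * q (n + 1) * advect (u n) (u n) i x
      - ν * lap (ut (n + 1) i) x + pd i (p n) x
      = (r (n + 1) / sfac ε γ δ (φ n)) * (μ n x * pd i (φ n) x)) ∧
  -- projection step
  (∀ n x, vdiv (u (n + 1)) x = 0) ∧
  (∀ n i x, (u (n + 1) i x - ut (n + 1) i x) / Δt
      + pd i (fun y => p (n + 1) y - p n y) x = 0) ∧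
  -- SAV step for q
  (∀ n, (q (n + 1) - q n) / Δt = -(q (n + 1)) / T
      + Real.exp (((n : ℝ) + 1) * Δt / T)
        * ∫ x, ∑ i, advect (u n) (u n) i x * ut (n + 1) i x)

/-- The discrete energy `Ẽⁿ` of the first-order scheme. -/
def Etil1 (γ Δt : ℝ) (φ p : ℕ → E2 → ℝ) (u : ℕ → Fin 2 → E2 → ℝ)
    (r q : ℕ → ℝ) (n : ℕ) : ℝ :=
  gradSq (φ n) + γ * sL2sq (φ n) + 2 * (r n) ^ 2 + vL2sq (u n)
    + Δt ^ 2 * gradSq (p n) + (q n) ^ 2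

lemma hcs_neg {g : E2 → ℝ} (h : HasCompactSupport g) : HasCompactSupport (fun x => -g x) :=
  h.mono' (fun x hx => subset_tsupport g (by simpa using hx))

def CSF (f : E2 → ℝ) : Prop := Continuous f ∧ HasCompactSupport f

lemma CSF.integrable {f : E2 → ℝ} (h : CSF f) : Integrable f :=
  h.1.integrable_of_hasCompactSupport h.2

lemma CSF.mul {f g : E2 → ℝ} (hf : CSF f) (hg : CSF g) : CSF (fun x => f x * g x) :=
  ⟨hf.1.mul hg.1, hf.2.mul_right⟩

lemma CSF.add {f g : E2 → ℝ} (hf : CSF f) (hg : CSF g) : CSF (fun x => f x + g x) :=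
  ⟨hf.1.add hg.1, hf.2.add hg.2⟩

lemma CSF.sub {f g : E2 → ℝ} (hf : CSF f) (hg : CSF g) : CSF (fun x => f x - g x) :=
  ⟨hf.1.sub hg.1, (by have := hf.2.add (hcs_neg hg.2); exact this)⟩

lemma CSF.const_mul {f : E2 → ℝ} (hf : CSF f) (c : ℝ) : CSF (fun x => c * f x) :=
  ⟨continuous_const.mul hf.1, hf.2.mul_left⟩

lemma SmoothCS.csf {f : E2 → ℝ} (h : SmoothCS f) : CSF f := ⟨h.1.continuous, h.2⟩

lemma SmoothCS.diff {f : E2 → ℝ} (h : SmoothCS f) : Differentiable ℝ f :=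
  h.1.differentiable (by simp)

lemma SmoothCS.pd {f : E2 → ℝ} (h : SmoothCS f) (i : Fin 2) : SmoothCS (pd i f) := by
  refine ⟨?_, ?_⟩
  · exact (h.1.fderiv_right (le_refl _)).clm_apply contDiff_const
  · exact (h.2.fderiv ℝ).comp_left (g := fun L : E2 →L[ℝ] ℝ => L (Pi.single i 1)) rfl

lemma SmoothCS.add {f g : E2 → ℝ} (hf : SmoothCS f) (hg : SmoothCS g) :
    SmoothCS (fun x => f x + g x) := ⟨hf.1.add hg.1, hf.2.add hg.2⟩

lemma SmoothCS.sub {f g : E2 → ℝ} (hf : SmoothCS f) (hg : SmoothCS g) :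
    SmoothCS (fun x => f x - g x) :=
  ⟨hf.1.sub hg.1, (by have := hf.2.add (hcs_neg hg.2); exact this)⟩

lemma pd_sub {f g : E2 → ℝ} (hf : SmoothCS f) (hg : SmoothCS g) (i : Fin 2) (x : E2) :
    pd i (fun y => f y - g y) x = pd i f x - pd i g x := by
  unfold pd
  rw [fderiv_fun_sub (hf.diff x) (hg.diff x)]
  simp

lemma int_congr {F G : E2 → ℝ} (h : ∀ x, F x = G x) : ∫ x, F x = ∫ x, G x :=
  integral_congr_ae (Filter.Eventually.of_forall h)

lemma int_expand1 {F F1 : E2 → ℝ} (c1 : ℝ) (hF : ∀ x, F x = c1 * F1 x) :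
    ∫ x, F x = c1 * (∫ x, F1 x) := by
  rw [int_congr hF, integral_const_mul]

lemma int_expand2 {F F1 F2 : E2 → ℝ} (h1 : CSF F1) (h2 : CSF F2) (c1 c2 : ℝ)
    (hF : ∀ x, F x = c1 * F1 x + c2 * F2 x) :
    ∫ x, F x = c1 * (∫ x, F1 x) + c2 * (∫ x, F2 x) := by
  rw [int_congr hF, integral_add ((h1.const_mul c1).integrable) ((h2.const_mul c2).integrable),
    integral_const_mul, integral_const_mul]

lemma int_expand3 {F F1 F2 F3 : E2 → ℝ} (h1 : CSF F1) (h2 : CSF F2) (h3 : CSF F3)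
    (c1 c2 c3 : ℝ)
    (hF : ∀ x, F x = c1 * F1 x + (c2 * F2 x + c3 * F3 x)) :
    ∫ x, F x = c1 * (∫ x, F1 x) + (c2 * (∫ x, F2 x) + c3 * (∫ x, F3 x)) := by
  rw [int_congr hF, integral_add ((h1.const_mul c1).integrable)
    (((h2.const_mul c2).add (h3.const_mul c3)).integrable), integral_const_mul,
    integral_add ((h2.const_mul c2).integrable) ((h3.const_mul c3).integrable),
    integral_const_mul, integral_const_mul]

lemma int_expand4 {F F1 F2 F3 F4 : E2 → ℝ} (h1 : CSF F1) (h2 : CSF F2) (h3 : CSF F3)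
    (h4 : CSF F4) (c1 c2 c3 c4 : ℝ)
    (hF : ∀ x, F x = c1 * F1 x + (c2 * F2 x + (c3 * F3 x + c4 * F4 x))) :
    ∫ x, F x = c1 * (∫ x, F1 x) + (c2 * (∫ x, F2 x) + (c3 * (∫ x, F3 x) + c4 * (∫ x, F4 x))) := by
  rw [int_congr hF, integral_add ((h1.const_mul c1).integrable)
    (((h2.const_mul c2).add ((h3.const_mul c3).add (h4.const_mul c4))).integrable),
    integral_const_mul,
    integral_add ((h2.const_mul c2).integrable)
      (((h3.const_mul c3).add (h4.const_mul c4)).integrable), integral_const_mul,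
    integral_add ((h3.const_mul c3).integrable) ((h4.const_mul c4).integrable),
    integral_const_mul, integral_const_mul]

lemma ibp {f g : E2 → ℝ} (hf : SmoothCS f) (hg : SmoothCS g) (i : Fin 2) :
    ∫ x, f x * pd i g x = -∫ x, pd i f x * g x :=
  integral_mul_fderiv_eq_neg_fderiv_mul_of_integrable
    ((hf.pd i).csf.mul hg.csf).integrable
    (hf.csf.mul (hg.pd i).csf).integrable
    (hf.csf.mul hg.csf).integrable (fun x _ => hf.diff x) (fun x _ => hg.diff x)

lemma csf_lap {g : E2 → ℝ} (hg : SmoothCS g) : CSF (fun x => lap g x) := by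
  have h : (fun x => lap g x) = fun x => pd 0 (pd 0 g) x + pd 1 (pd 1 g) x :=
    funext fun x => by simp [lap, Fin.sum_univ_two]
  rw [h]
  exact ((hg.pd 0).pd 0).csf.add ((hg.pd 1).pd 1).csf

lemma csf_advect {w : Fin 2 → E2 → ℝ} (hw : ∀ i, SmoothCS (w i)) (i : Fin 2) :
    CSF (fun x => advect w w i x) := by
  have h : (fun x => advect w w i x)
      = fun x => w 0 x * pd 0 (w i) x + w 1 x * pd 1 (w i) x :=
    funext fun x => by simp [advect, Fin.sum_univ_two]
  rw [h]
  exact ((hw 0).csf.mul ((hw i).pd 0).csf).add ((hw 1).csf.mul ((hw i).pd 1).csf)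

lemma ibp_lap' {f g : E2 → ℝ} (hf : SmoothCS f) (hg : SmoothCS g) :
    ∫ x, f x * lap g x = -∫ x, (pd 0 f x * pd 0 g x + pd 1 f x * pd 1 g x) := by
  have h0 : ∫ x, f x * pd 0 (pd 0 g) x = -∫ x, pd 0 f x * pd 0 g x := ibp hf (hg.pd 0) 0
  have h1 : ∫ x, f x * pd 1 (pd 1 g) x = -∫ x, pd 1 f x * pd 1 g x := ibp hf (hg.pd 1) 1
  calc ∫ x, f x * lap g x
      = ∫ x, (f x * pd 0 (pd 0 g) x + f x * pd 1 (pd 1 g) x) :=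
        int_congr fun x => by simp [lap, Fin.sum_univ_two, mul_add]
    _ = (∫ x, f x * pd 0 (pd 0 g) x) + ∫ x, f x * pd 1 (pd 1 g) x :=
        integral_add (hf.csf.mul ((hg.pd 0).pd 0).csf).integrable
          (hf.csf.mul ((hg.pd 1).pd 1).csf).integrable
    _ = -((∫ x, pd 0 f x * pd 0 g x) + ∫ x, pd 1 f x * pd 1 g x) := by rw [h0, h1]; ring
    _ = -∫ x, (pd 0 f x * pd 0 g x + pd 1 f x * pd 1 g x) := by
        rw [integral_add ((hf.pd 0).csf.mul (hg.pd 0).csf).integrable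
          ((hf.pd 1).csf.mul (hg.pd 1).csf).integrable]

lemma ibp_lap_self {g : E2 → ℝ} (hg : SmoothCS g) :
    ∫ x, g x * lap g x = -∫ x, ((pd 0 g x) ^ 2 + (pd 1 g x) ^ 2) := by
  rw [ibp_lap' hg hg]
  congr 1
  exact int_congr fun x => by ring

lemma CSF.sq {f : E2 → ℝ} (h : CSF f) : CSF (fun x => f x ^ 2) :=
  ⟨h.1.pow 2, h.2.mono' (fun x hx => subset_tsupport f
    (fun h0 => hx (show f x ^ 2 = 0 by rw [h0]; ring)))⟩

/-- Unconditional energy stability of the first-order fully decoupled MSAV scheme: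
for every `n` and every `Δt > 0`,
`Ẽ^{n+1} - Ẽⁿ ≤ -2MΔt‖∇μ^{n+1}‖² - 2νΔt‖∇ũ^{n+1}‖² - (2Δt/T)|q^{n+1}|²`. -/
theorem first_order_msav_energy_stable (M ν ε γ δ T Δt : ℝ)
    (hM : 0 < M) (hν : 0 < ν) (hε : 0 < ε) (hγ : 0 < γ) (hδ : γ < δ)
    (hT : 0 < T) (hΔt : 0 < Δt)
    (φ μ p : ℕ → E2 → ℝ) (u ut : ℕ → Fin 2 → E2 → ℝ) (r q : ℕ → ℝ)
    (hscheme : IsFirstOrderMSAV M ν ε γ δ T Δt φ μ p u ut r q) :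
    ∀ n : ℕ,
      Etil1 γ Δt φ p u r q (n + 1) - Etil1 γ Δt φ p u r q n
        ≤ -2 * M * Δt * gradSq (μ (n + 1)) - 2 * ν * Δt * vgradSq (ut (n + 1))
            - (2 * Δt / T) * (q (n + 1)) ^ 2 := by

  intro n
  obtain ⟨hφ, hμ, hp, hu, hut, hE1p, hCH1, hCH2, hrr, hmom, hdivf, hproj, hq⟩ := hscheme
  have hΔne : Δt ≠ 0 := ne_of_gt hΔt
  have hspos : 0 < sfac ε γ δ (φ n) := Real.sqrt_pos.mpr (hE1p n)
  -- smoothness shorthands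
  have sP0 := hφ n; have sP1 := hφ (n+1); have sW0 := hμ n; have sW1 := hμ (n+1)
  have sp0 := hp n; have sp1 := hp (n+1)
  have sU00 := hu n 0; have sU01 := hu n 1
  have sU10 := hu (n+1) 0; have sU11 := hu (n+1) 1
  have sV0 := hut (n+1) 0; have sV1 := hut (n+1) 1
  have cFp : CSF (fun x => Fprime ε γ (φ n x)) := by
    refine ⟨?_, ?_⟩
    · show Continuous fun x => (1 / ε ^ 2) * φ n x * ((φ n x) ^ 2 - 1) - γ * φ n x
      exact ((continuous_const.mul sP0.1.continuous).mul
        ((sP0.1.continuous.pow 2).sub continuous_const)).sub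
        (continuous_const.mul sP0.1.continuous)
    · exact sP0.2.mono' (fun x hx => subset_tsupport (φ n)
        (fun h0 => hx (show Fprime ε γ (φ n x) = 0 by rw [h0]; simp [Fprime])))
  -- specialize the scheme at n
  have h1 := hCH1 n
  have h2 := hCH2 n
  have hrn := hrr n
  have h4 := hmom n
  have h5 := hdivf n
  have h6 := hproj n
  have hqn := hq n
  simp only [Fin.sum_univ_two] at h1 hrn hqn
  set s : ℝ := sfac ε γ δ (φ n) with hsdef
  have hsne : s ≠ 0 := ne_of_gt hspos
  -- atoms
  set J_IW := ∫ x, (φ (n+1) x - φ n x) * μ (n+1) x with hJIW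
  set J_A1 := ∫ x, (u n 0 x * pd 0 (φ n) x + u n 1 x * pd 1 (φ n) x) * μ (n+1) x with hJA1
  set J_A2 := ∫ x, Fprime ε γ (φ n x) * (φ (n+1) x - φ n x) with hJA2
  set J_A3 := ∫ x, (ut (n+1) 0 x * (μ n x * pd 0 (φ n) x) + ut (n+1) 1 x * (μ n x * pd 1 (φ n) x)) with hJA3
  set J_A4 := ∫ x, (advect (u n) (u n) 0 x * ut (n+1) 0 x + advect (u n) (u n) 1 x * ut (n+1) 1 x) with hJA4
  set J_GW := ∫ x, ((pd 0 (μ (n+1)) x) ^ 2 + (pd 1 (μ (n+1)) x) ^ 2) with hJGW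
  set J_X := ∫ x, ((pd 0 (φ (n+1)) x - pd 0 (φ n) x) * pd 0 (φ (n+1)) x + (pd 1 (φ (n+1)) x - pd 1 (φ n) x) * pd 1 (φ (n+1)) x) with hJX
  set J_Y := ∫ x, φ (n+1) x * (φ (n+1) x - φ n x) with hJY
  set J_G0 := ∫ x, ((pd 0 (φ n) x) ^ 2 + (pd 1 (φ n) x) ^ 2) with hJG0
  set J_G1 := ∫ x, ((pd 0 (φ (n+1)) x) ^ 2 + (pd 1 (φ (n+1)) x) ^ 2) with hJG1
  set J_GD := ∫ x, ((pd 0 (φ (n+1)) x - pd 0 (φ n) x) ^ 2 + (pd 1 (φ (n+1)) x - pd 1 (φ n) x) ^ 2) with hJGD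
  set J_S0 := ∫ x, (φ n x) ^ 2 with hJS0
  set J_S1 := ∫ x, (φ (n+1) x) ^ 2 with hJS1
  set J_SD := ∫ x, (φ (n+1) x - φ n x) ^ 2 with hJSD
  set J_XV := ∫ x, ((ut (n+1) 0 x - u n 0 x) * ut (n+1) 0 x + (ut (n+1) 1 x - u n 1 x) * ut (n+1) 1 x) with hJXV
  set J_VG := ∫ x, (((pd 0 (ut (n+1) 0) x) ^ 2 + (pd 1 (ut (n+1) 0) x) ^ 2) + ((pd 0 (ut (n+1) 1) x) ^ 2 + (pd 1 (ut (n+1) 1) x) ^ 2)) with hJVG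
  set J_LV := ∫ x, (ut (n+1) 0 x * lap (ut (n+1) 0) x + ut (n+1) 1 x * lap (ut (n+1) 1) x) with hJLV
  set J_P := ∫ x, (pd 0 (p n) x * ut (n+1) 0 x + pd 1 (p n) x * ut (n+1) 1 x) with hJP
  set J_Pu := ∫ x, (pd 0 (p n) x * u (n+1) 0 x + pd 1 (p n) x * u (n+1) 1 x) with hJPu
  set J_Cp := ∫ x, (pd 0 (p n) x * (pd 0 (p (n+1)) x - pd 0 (p n) x) + pd 1 (p n) x * (pd 1 (p (n+1)) x - pd 1 (p n) x)) with hJCp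
  set J_Cq := ∫ x, (u (n+1) 0 x * (pd 0 (p (n+1)) x - pd 0 (p n) x) + u (n+1) 1 x * (pd 1 (p (n+1)) x - pd 1 (p n) x)) with hJCq
  set J_NV := ∫ x, ((ut (n+1) 0 x) ^ 2 + (ut (n+1) 1 x) ^ 2) with hJNV
  set J_NU0 := ∫ x, ((u n 0 x) ^ 2 + (u n 1 x) ^ 2) with hJNU0
  set J_NU1 := ∫ x, ((u (n+1) 0 x) ^ 2 + (u (n+1) 1 x) ^ 2) with hJNU1
  set J_NdV := ∫ x, ((ut (n+1) 0 x - u n 0 x) ^ 2 + (ut (n+1) 1 x - u n 1 x) ^ 2) with hJNdV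
  set J_Gp0 := ∫ x, ((pd 0 (p n) x) ^ 2 + (pd 1 (p n) x) ^ 2) with hJGp0
  set J_Gp1 := ∫ x, ((pd 0 (p (n+1)) x) ^ 2 + (pd 1 (p (n+1)) x) ^ 2) with hJGp1
  set J_GDp := ∫ x, ((pd 0 (p (n+1)) x - pd 0 (p n) x) ^ 2 + (pd 1 (p (n+1)) x - pd 1 (p n) x) ^ 2) with hJGDp
  clear_value s J_IW J_A1 J_A2 J_A3 J_A4 J_GW J_X J_Y J_G0 J_G1 J_GD J_S0 J_S1 J_SD J_XV J_VG J_LV J_P J_Pu J_Cp J_Cq J_NV J_NU0 J_NU1 J_NdV J_Gp0 J_Gp1 J_GDp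
  -- eq1 : tested CH equation against μ^{n+1}
  have base1 : ∫ x, (2*Δt*s) * (((φ (n+1) x - φ n x) / Δt + r (n+1) / s * (u n 0 x * pd 0 (φ n) x + u n 1 x * pd 1 (φ n) x)) * μ (n+1) x)
      = ∫ x, (2*Δt*s) * ((M * lap (μ (n+1)) x) * μ (n+1) x) :=
    int_congr fun x => by rw [h1 x]
  have lhs1 : ∫ x, (2*Δt*s) * (((φ (n+1) x - φ n x) / Δt + r (n+1) / s * (u n 0 x * pd 0 (φ n) x + u n 1 x * pd 1 (φ n) x)) * μ (n+1) x)
      = 2*s * J_IW + 2*Δt*r (n+1) * J_A1 := by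
    rw [hJIW, hJA1]
    exact int_expand2 ((sP1.csf.sub sP0.csf).mul sW1.csf)
      (((sU00.csf.mul (sP0.pd 0).csf).add (sU01.csf.mul (sP0.pd 1).csf)).mul sW1.csf)
      _ _ (fun x => by field_simp)
  have rhs1 : ∫ x, (2*Δt*s) * ((M * lap (μ (n+1)) x) * μ (n+1) x)
      = (2*Δt*s*M) * (∫ x, μ (n+1) x * lap (μ (n+1)) x) :=
    int_expand1 _ (fun x => by ring)
  have hlapW : ∫ x, μ (n+1) x * lap (μ (n+1)) x = -J_GW := by
    rw [hJGW]; exact ibp_lap_self sW1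
  have eq1 : 2*s*J_IW + 2*Δt*(r (n+1))*J_A1 = -(2*Δt*s*M*J_GW) := by
    have hh := base1
    rw [lhs1, rhs1, hlapW] at hh
    linarith [hh]
  -- eq2 : chemical potential equation tested against φ^{n+1}-φ^n
  have base2 : ∫ x, (2*s) * (μ (n+1) x * (φ (n+1) x - φ n x))
      = ∫ x, (2*s) * ((-lap (φ (n+1)) x + γ * φ (n+1) x + r (n+1) / s * Fprime ε γ (φ n x)) * (φ (n+1) x - φ n x)) :=
    int_congr fun x => by rw [h2 x]
  have lhs2 : ∫ x, (2*s) * (μ (n+1) x * (φ (n+1) x - φ n x)) = 2*s * J_IW := by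
    rw [hJIW]; exact int_expand1 _ (fun x => by ring)
  have hlap2 : ∫ x, (φ (n+1) x - φ n x) * lap (φ (n+1)) x = -J_X := by
    rw [hJX]
    calc ∫ x, (φ (n+1) x - φ n x) * lap (φ (n+1)) x
        = -∫ x, (pd 0 (fun y => φ (n+1) y - φ n y) x * pd 0 (φ (n+1)) x
            + pd 1 (fun y => φ (n+1) y - φ n y) x * pd 1 (φ (n+1)) x) :=
          ibp_lap' (sP1.sub sP0) sP1
      _ = -∫ x, ((pd 0 (φ (n+1)) x - pd 0 (φ n) x) * pd 0 (φ (n+1)) x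
            + (pd 1 (φ (n+1)) x - pd 1 (φ n) x) * pd 1 (φ (n+1)) x) := by
          congr 1
          exact int_congr fun x => by rw [pd_sub sP1 sP0 0 x, pd_sub sP1 sP0 1 x]
  have rhs2 : ∫ x, (2*s) * ((-lap (φ (n+1)) x + γ * φ (n+1) x + r (n+1) / s * Fprime ε γ (φ n x)) * (φ (n+1) x - φ n x))
      = (-(2*s)) * (∫ x, (φ (n+1) x - φ n x) * lap (φ (n+1)) x)
        + ((2*s*γ) * J_Y + (2*r (n+1)) * J_A2) := by
    rw [hJY, hJA2]
    exact int_expand3 ((sP1.csf.sub sP0.csf).mul (csf_lap sP1))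
      (sP1.csf.mul (sP1.csf.sub sP0.csf)) (cFp.mul (sP1.csf.sub sP0.csf)) _ _ _
      (fun x => by field_simp; ring)
  have eq2 : 2*s*J_IW = 2*s*J_X + (2*s*γ*J_Y + 2*(r (n+1))*J_A2) := by
    have hh := base2
    rw [lhs2, rhs2, hlap2] at hh
    linarith [hh]
  -- expansions of squared differences
  have eq3 : J_GD = (-1)*J_G1 + (1*J_G0 + 2*J_X) := by
    rw [hJGD, hJG1, hJG0, hJX]
    exact int_expand3 (((sP1.pd 0).csf.sq).add ((sP1.pd 1).csf.sq))
      (((sP0.pd 0).csf.sq).add ((sP0.pd 1).csf.sq))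
      ((((sP1.pd 0).csf.sub (sP0.pd 0).csf).mul (sP1.pd 0).csf).add
        (((sP1.pd 1).csf.sub (sP0.pd 1).csf).mul (sP1.pd 1).csf))
      (-1) 1 2 (fun x => by ring)
  have eq3b : J_SD = (-1)*J_S1 + (1*J_S0 + 2*J_Y) := by
    rw [hJSD, hJS1, hJS0, hJY]
    exact int_expand3 (sP1.csf.sq) (sP0.csf.sq) (sP1.csf.mul (sP1.csf.sub sP0.csf))
      (-1) 1 2 (fun x => by ring)
  -- the r-equation
  have hA2' : ∫ x, Fprime ε γ (φ n x) * ((φ (n+1) x - φ n x) / Δt) = (1/Δt) * J_A2 := by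
    rw [hJA2]; exact int_expand1 _ (fun x => by ring)
  have hA1' : ∫ x, μ (n+1) x * (u n 0 x * pd 0 (φ n) x + u n 1 x * pd 1 (φ n) x) = J_A1 := by
    rw [hJA1]; exact int_congr (fun x => by ring)
  rw [hA2', hA1'] at hrn
  rw [div_eq_iff hΔne] at hrn
  have Er : 2*s*(r (n+1) - r n) = J_A2 + (Δt*J_A1 - Δt*J_A3) := by
    rw [hrn]; field_simp; ring
  -- momentum equation tested against ũ^{n+1}
  have base4 : ∫ x, (2*Δt*s) * (((ut (n+1) 0 x - u n 0 x) / Δt + Real.exp (((n:ℝ)+1)*Δt/T) * q (n+1) * advect (u n) (u n) 0 x - ν * lap (ut (n+1) 0) x + pd 0 (p n) x) * ut (n+1) 0 x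
        + ((ut (n+1) 1 x - u n 1 x) / Δt + Real.exp (((n:ℝ)+1)*Δt/T) * q (n+1) * advect (u n) (u n) 1 x - ν * lap (ut (n+1) 1) x + pd 1 (p n) x) * ut (n+1) 1 x)
      = ∫ x, (2*Δt*s) * ((r (n+1) / s * (μ n x * pd 0 (φ n) x)) * ut (n+1) 0 x
        + (r (n+1) / s * (μ n x * pd 1 (φ n) x)) * ut (n+1) 1 x) :=
    int_congr fun x => by rw [h4 0 x, h4 1 x]
  have lhs4 : ∫ x, (2*Δt*s) * (((ut (n+1) 0 x - u n 0 x) / Δt + Real.exp (((n:ℝ)+1)*Δt/T) * q (n+1) * advect (u n) (u n) 0 x - ν * lap (ut (n+1) 0) x + pd 0 (p n) x) * ut (n+1) 0 x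
        + ((ut (n+1) 1 x - u n 1 x) / Δt + Real.exp (((n:ℝ)+1)*Δt/T) * q (n+1) * advect (u n) (u n) 1 x - ν * lap (ut (n+1) 1) x + pd 1 (p n) x) * ut (n+1) 1 x)
      = (2*s) * J_XV + ((2*Δt*s*Real.exp (((n:ℝ)+1)*Δt/T)*q (n+1)) * J_A4
          + ((-(2*ν*Δt*s)) * J_LV + (2*Δt*s) * J_P)) := by
    rw [hJXV, hJA4, hJLV, hJP]
    exact int_expand4
      (((sV0.csf.sub sU00.csf).mul sV0.csf).add ((sV1.csf.sub sU01.csf).mul sV1.csf))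
      (((csf_advect (hu n) 0).mul sV0.csf).add ((csf_advect (hu n) 1).mul sV1.csf))
      ((sV0.csf.mul (csf_lap sV0)).add (sV1.csf.mul (csf_lap sV1)))
      (((sp0.pd 0).csf.mul sV0.csf).add ((sp0.pd 1).csf.mul sV1.csf))
      _ _ _ _ (fun x => by field_simp; ring)
  have rhs4 : ∫ x, (2*Δt*s) * ((r (n+1) / s * (μ n x * pd 0 (φ n) x)) * ut (n+1) 0 x
        + (r (n+1) / s * (μ n x * pd 1 (φ n) x)) * ut (n+1) 1 x)
      = (2*Δt*r (n+1)) * J_A3 := by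
    rw [hJA3]; exact int_expand1 _ (fun x => by field_simp)
  have hlapV : J_LV = -J_VG := by
    rw [hJLV, hJVG]
    calc ∫ x, (ut (n+1) 0 x * lap (ut (n+1) 0) x + ut (n+1) 1 x * lap (ut (n+1) 1) x)
        = (∫ x, ut (n+1) 0 x * lap (ut (n+1) 0) x) + ∫ x, ut (n+1) 1 x * lap (ut (n+1) 1) x :=
          integral_add (sV0.csf.mul (csf_lap sV0)).integrable (sV1.csf.mul (csf_lap sV1)).integrable
      _ = -((∫ x, ((pd 0 (ut (n+1) 0) x) ^ 2 + (pd 1 (ut (n+1) 0) x) ^ 2))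
            + ∫ x, ((pd 0 (ut (n+1) 1) x) ^ 2 + (pd 1 (ut (n+1) 1) x) ^ 2)) := by
          rw [ibp_lap_self sV0, ibp_lap_self sV1]; ring
      _ = -∫ x, (((pd 0 (ut (n+1) 0) x) ^ 2 + (pd 1 (ut (n+1) 0) x) ^ 2)
            + ((pd 0 (ut (n+1) 1) x) ^ 2 + (pd 1 (ut (n+1) 1) x) ^ 2)) := by
          rw [integral_add (((sV0.pd 0).csf.sq).add ((sV0.pd 1).csf.sq)).integrable
            (((sV1.pd 0).csf.sq).add ((sV1.pd 1).csf.sq)).integrable]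
  have eq4 : 2*s*J_XV + (2*Δt*s*Real.exp (((n:ℝ)+1)*Δt/T)*q (n+1)*J_A4
      + (2*ν*Δt*s*J_VG + 2*Δt*s*J_P)) = 2*Δt*(r (n+1))*J_A3 := by
    have hh := base4
    rw [lhs4, rhs4, hlapV] at hh
    linarith [hh]
  have eq5 : J_NdV = (-1)*J_NV + (1*J_NU0 + 2*J_XV) := by
    rw [hJNdV, hJNV, hJNU0, hJXV]
    exact int_expand3 ((sV0.csf.sq).add (sV1.csf.sq)) ((sU00.csf.sq).add (sU01.csf.sq))
      (((sV0.csf.sub sU00.csf).mul sV0.csf).add ((sV1.csf.sub sU01.csf).mul sV1.csf))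
      (-1) 1 2 (fun x => by ring)
  -- projection step, pointwise
  have hVU : ∀ i x, ut (n+1) i x = u (n+1) i x + Δt * (pd i (p (n+1)) x - pd i (p n) x) := by
    intro i x
    have h := h6 i x
    rw [pd_sub sp1 sp0 i x] at h
    have h3 : (u (n+1) i x - ut (n+1) i x) / Δt = -(pd i (p (n+1)) x - pd i (p n) x) := by
      linear_combination h
    rw [div_eq_iff hΔne] at h3
    linear_combination -h3
  have eq6 : J_P = 1*J_Pu + Δt*J_Cp := by
    rw [hJP, hJPu, hJCp]
    exact int_expand2 (((sp0.pd 0).csf.mul sU10.csf).add ((sp0.pd 1).csf.mul sU11.csf))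
      (((sp0.pd 0).csf.mul ((sp1.pd 0).csf.sub (sp0.pd 0).csf)).add
        ((sp0.pd 1).csf.mul ((sp1.pd 1).csf.sub (sp0.pd 1).csf)))
      1 Δt (fun x => by rw [hVU 0 x, hVU 1 x]; ring)
  have hzero : ∀ x : E2, pd 0 (u (n+1) 0) x + pd 1 (u (n+1) 1) x = 0 := by
    intro x
    have hd := h5 x
    simp only [vdiv, Fin.sum_univ_two] at hd
    exact hd
  have eq6b : J_Pu = 0 := by
    rw [hJPu]
    have i0 : ∫ x, pd 0 (p n) x * u (n+1) 0 x = -∫ x, p n x * pd 0 (u (n+1) 0) x := by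
      have h := ibp sp0 sU10 0
      linarith [h]
    have i1 : ∫ x, pd 1 (p n) x * u (n+1) 1 x = -∫ x, p n x * pd 1 (u (n+1) 1) x := by
      have h := ibp sp0 sU11 1
      linarith [h]
    calc ∫ x, (pd 0 (p n) x * u (n+1) 0 x + pd 1 (p n) x * u (n+1) 1 x)
        = (∫ x, pd 0 (p n) x * u (n+1) 0 x) + ∫ x, pd 1 (p n) x * u (n+1) 1 x :=
          integral_add ((sp0.pd 0).csf.mul sU10.csf).integrable
            ((sp0.pd 1).csf.mul sU11.csf).integrable
      _ = -((∫ x, p n x * pd 0 (u (n+1) 0) x) + ∫ x, p n x * pd 1 (u (n+1) 1) x) := by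
          rw [i0, i1]; ring
      _ = -∫ x, (p n x * pd 0 (u (n+1) 0) x + p n x * pd 1 (u (n+1) 1) x) := by
          rw [integral_add (sp0.csf.mul ((sU10.pd 0)).csf).integrable
            (sp0.csf.mul ((sU11.pd 1)).csf).integrable]
      _ = -∫ x, (0:ℝ) := by
          congr 1
          exact int_congr fun x => by rw [← mul_add, hzero x, mul_zero]
      _ = 0 := by simp
  have eq7 : J_Gp1 = 1*J_Gp0 + (2*J_Cp + 1*J_GDp) := by
    rw [hJGp1, hJGp0, hJCp, hJGDp]
    exact int_expand3 (((sp0.pd 0).csf.sq).add ((sp0.pd 1).csf.sq))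
      (((sp0.pd 0).csf.mul ((sp1.pd 0).csf.sub (sp0.pd 0).csf)).add
        ((sp0.pd 1).csf.mul ((sp1.pd 1).csf.sub (sp0.pd 1).csf)))
      ((((sp1.pd 0).csf.sub (sp0.pd 0).csf).sq).add (((sp1.pd 1).csf.sub (sp0.pd 1).csf).sq))
      1 2 1 (fun x => by ring)
  have eq8 : J_NV = 1*J_NU1 + (2*Δt*J_Cq + Δt^2*J_GDp) := by
    rw [hJNV, hJNU1, hJCq, hJGDp]
    exact int_expand3 ((sU10.csf.sq).add (sU11.csf.sq))
      ((sU10.csf.mul ((sp1.pd 0).csf.sub (sp0.pd 0).csf)).add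
        (sU11.csf.mul ((sp1.pd 1).csf.sub (sp0.pd 1).csf)))
      ((((sp1.pd 0).csf.sub (sp0.pd 0).csf).sq).add (((sp1.pd 1).csf.sub (sp0.pd 1).csf).sq))
      1 (2*Δt) (Δt^2) (fun x => by rw [hVU 0 x, hVU 1 x]; ring)
  have eq9 : J_Cq = 0 := by
    rw [hJCq]
    have conv : ∫ x, (u (n+1) 0 x * (pd 0 (p (n+1)) x - pd 0 (p n) x)
          + u (n+1) 1 x * (pd 1 (p (n+1)) x - pd 1 (p n) x))
        = ∫ x, (u (n+1) 0 x * pd 0 (fun y => p (n+1) y - p n y) x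
          + u (n+1) 1 x * pd 1 (fun y => p (n+1) y - p n y) x) :=
      int_congr fun x => by rw [pd_sub sp1 sp0 0 x, pd_sub sp1 sp0 1 x]
    rw [conv]
    have i0 : ∫ x, u (n+1) 0 x * pd 0 (fun y => p (n+1) y - p n y) x
        = -∫ x, pd 0 (u (n+1) 0) x * (p (n+1) x - p n x) := ibp sU10 (sp1.sub sp0) 0
    have i1 : ∫ x, u (n+1) 1 x * pd 1 (fun y => p (n+1) y - p n y) x
        = -∫ x, pd 1 (u (n+1) 1) x * (p (n+1) x - p n x) := ibp sU11 (sp1.sub sp0) 1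
    calc ∫ x, (u (n+1) 0 x * pd 0 (fun y => p (n+1) y - p n y) x
          + u (n+1) 1 x * pd 1 (fun y => p (n+1) y - p n y) x)
        = (∫ x, u (n+1) 0 x * pd 0 (fun y => p (n+1) y - p n y) x)
          + ∫ x, u (n+1) 1 x * pd 1 (fun y => p (n+1) y - p n y) x :=
          integral_add (sU10.csf.mul ((sp1.sub sp0).pd 0).csf).integrable
            (sU11.csf.mul ((sp1.sub sp0).pd 1).csf).integrable
      _ = -((∫ x, pd 0 (u (n+1) 0) x * (p (n+1) x - p n x))
            + ∫ x, pd 1 (u (n+1) 1) x * (p (n+1) x - p n x)) := by rw [i0, i1]; ring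
      _ = -∫ x, (pd 0 (u (n+1) 0) x * (p (n+1) x - p n x)
            + pd 1 (u (n+1) 1) x * (p (n+1) x - p n x)) := by
          rw [integral_add ((sU10.pd 0).csf.mul (sp1.csf.sub sp0.csf)).integrable
            ((sU11.pd 1).csf.mul (sp1.csf.sub sp0.csf)).integrable]
      _ = -∫ x, (0:ℝ) := by
          congr 1
          exact int_congr fun x => by rw [← add_mul, hzero x, zero_mul]
      _ = 0 := by simp
  -- the q-equation
  rw [div_eq_iff hΔne] at hqn
  have eq10 : q (n+1) - q n = -(Δt*(q (n+1))/T) + Δt*(Real.exp (((n:ℝ)+1)*Δt/T)*J_A4) := by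
    rw [hqn]; ring
  -- master identity
  have hmain : s * ((J_G1 + γ*J_S1 + 2*(r (n+1))^2 + J_NU1 + Δt^2*J_Gp1 + (q (n+1))^2)
        - (J_G0 + γ*J_S0 + 2*(r n)^2 + J_NU0 + Δt^2*J_Gp0 + (q n)^2)
        + (J_GD + γ*J_SD + (2*(r (n+1) - r n)^2 + (J_NdV + (q (n+1) - q n)^2))))
      = s * (-2*M*Δt*J_GW - 2*ν*Δt*J_VG - 2*Δt/T*(q (n+1))^2) := by
    linear_combination eq1 - eq2 + s*eq3 + (γ*s)*eq3b + (2*(r (n+1)))*Er + eq4 + s*eq5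
      + (-(2*s*Δt))*eq6 + (-(2*s*Δt))*eq6b + (s*Δt^2)*eq7 + (-s)*eq8 + (-(2*s*Δt))*eq9
      + (2*s*(q (n+1)))*eq10
  have main := mul_left_cancel₀ hsne hmain
  -- conversions of the energy functionals
  have cG1 : gradSq (φ (n+1)) = J_G1 := by
    rw [hJG1]; exact int_congr fun x => by rw [Fin.sum_univ_two]
  have cG0 : gradSq (φ n) = J_G0 := by
    rw [hJG0]; exact int_congr fun x => by rw [Fin.sum_univ_two]
  have cS1 : sL2sq (φ (n+1)) = J_S1 := by rw [hJS1]; rfl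
  have cS0 : sL2sq (φ n) = J_S0 := by rw [hJS0]; rfl
  have cNU1 : vL2sq (u (n+1)) = J_NU1 := by
    rw [hJNU1]; exact int_congr fun x => by rw [Fin.sum_univ_two]
  have cNU0 : vL2sq (u n) = J_NU0 := by
    rw [hJNU0]; exact int_congr fun x => by rw [Fin.sum_univ_two]
  have cGp1 : gradSq (p (n+1)) = J_Gp1 := by
    rw [hJGp1]; exact int_congr fun x => by rw [Fin.sum_univ_two]
  have cGp0 : gradSq (p n) = J_Gp0 := by
    rw [hJGp0]; exact int_congr fun x => by rw [Fin.sum_univ_two]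
  have cGW : gradSq (μ (n+1)) = J_GW := by
    rw [hJGW]; exact int_congr fun x => by rw [Fin.sum_univ_two]
  have cVG : vgradSq (ut (n+1)) = J_VG := by
    rw [hJVG]; exact int_congr fun x => by simp [Fin.sum_univ_two]
  -- nonnegativity of the dissipation terms
  have nn1 : 0 ≤ J_GD := by
    rw [hJGD]; exact integral_nonneg fun x => add_nonneg (sq_nonneg _) (sq_nonneg _)
  have nn2 : 0 ≤ J_SD := by
    rw [hJSD]; exact integral_nonneg fun x => sq_nonneg _
  have nn3 : 0 ≤ J_NdV := by
    rw [hJNdV]; exact integral_nonneg fun x => add_nonneg (sq_nonneg _) (sq_nonneg _)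
  have nnγ : 0 ≤ γ * J_SD := mul_nonneg hγ.le nn2
  simp only [Etil1]
  rw [cG1, cG0, cS1, cS0, cNU1, cNU0, cGp1, cGp0, cGW, cVG]
  have hr2 : (0:ℝ) ≤ 2*(r (n+1) - r n)^2 := by positivity
  have hq2 : (0:ℝ) ≤ (q (n+1) - q n)^2 := sq_nonneg _
  linarith only [main, nn1, nn3, nnγ, hr2, hq2]
end
end

section
/- For Δt sufficiently small, the 2×2 linear algebraic system A₁ξ₁ + A₂ξ₂ = A₀, B₁ξ₁ + B₂ξ₂ = B₀ determining the scalar factors ξ₁ = r^{n+1}/√(E₁(φⁿ)+δ) and ξ₂ = exp(t^{n+1}/T)q^{n+1} in the decoupled implementation of the first-order MSAV scheme has a unique solution: the determinant A₁B₂ - A₂B₁ is positive because its dominant term √(E₁(φⁿ)+δ)·exp(-t^{n+1}/T)/(Δt)² grows like 1/(Δt)² while all other terms are bounded uniformly. -/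
/-- Well-posedness of the `2×2` linear system determining `(ξ₁, ξ₂)` in the
decoupled implementation of the first-order MSAV scheme: with
`A₁ = s/Δt - a₁(Δt)`, `A₂ = -a₂(Δt)`, `B₁ = -b₁(Δt)`,
`B₂ = e/Δt + e/T - b₂(Δt)`, where `s = √(E₁(φⁿ)+δ) > 0`, `e = exp(-t^{n+1}/T) > 0`
and the remainder terms `a₁, a₂, b₁, b₂` are uniformly bounded by `C`, the
determinant `A₁B₂ - A₂B₁` (whose dominant term is `s·e/Δt² ~ 1/Δt²`) is positive
for all sufficiently small `Δt > 0`, so the system has a unique solution. -/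
theorem msav_2x2_system_wellposed (s e T C : ℝ) (hs : 0 < s) (he : 0 < e) (hT : 0 < T)
    (a₁ a₂ b₁ b₂ : ℝ → ℝ)
    (hbound : ∀ Δt : ℝ, 0 < Δt →
      |a₁ Δt| ≤ C ∧ |a₂ Δt| ≤ C ∧ |b₁ Δt| ≤ C ∧ |b₂ Δt| ≤ C) :
    ∃ Δt₀ > 0, ∀ Δt : ℝ, 0 < Δt → Δt < Δt₀ →
      0 < (s / Δt - a₁ Δt) * (e / Δt + e / T - b₂ Δt) - (-a₂ Δt) * (-b₁ Δt) ∧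
      ∀ A₀ B₀ : ℝ, ∃! ξ : ℝ × ℝ,
        (s / Δt - a₁ Δt) * ξ.1 + (-a₂ Δt) * ξ.2 = A₀ ∧
        (-b₁ Δt) * ξ.1 + (e / Δt + e / T - b₂ Δt) * ξ.2 = B₀ := by
  have hC0 : 0 ≤ C := le_trans (abs_nonneg _) (hbound 1 one_pos).1
  set C' : ℝ := C + 1 with hC'
  have hC'pos : 0 < C' := by positivity
  have hCC' : C < C' := by simp [hC']
  set Δt₀ : ℝ := min (s / (2 * C')) (min (e / (2 * C')) (Real.sqrt (s * e) / (2 * C')))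
    with hΔt₀
  refine ⟨Δt₀, by positivity, fun Δt hΔt hΔtlt => ?_⟩
  obtain ⟨h1, h2, h3, h4⟩ := hbound Δt hΔt
  have hA : s / (2 * Δt) ≤ s / Δt - a₁ Δt := by
    have hl : Δt < s / (2 * C') := lt_of_lt_of_le hΔtlt (min_le_left _ _)
    have : Δt * (2 * C') < s := (lt_div_iff₀ (by positivity)).mp hl
    have ha : a₁ Δt ≤ C := le_trans (le_abs_self _) h1
    have hC's : C' ≤ s / (2 * Δt) := by
      rw [le_div_iff₀ (by positivity)]; nlinarith
    have hs2 : s / Δt = s / (2 * Δt) + s / (2 * Δt) := by field_simp; ring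
    linarith
  have hB : e / (2 * Δt) ≤ e / Δt + e / T - b₂ Δt := by
    have hl : Δt < e / (2 * C') := lt_of_lt_of_le hΔtlt (le_trans (min_le_right _ _) (min_le_left _ _))
    have : Δt * (2 * C') < e := (lt_div_iff₀ (by positivity)).mp hl
    have hb : b₂ Δt ≤ C := le_trans (le_abs_self _) h4
    have hTe : 0 ≤ e / T := by positivity
    have : b₂ Δt ≤ e / (2 * Δt) := by
      rw [le_div_iff₀ (by positivity)]
      nlinarith
    have he2 : e / Δt = e / (2 * Δt) + e / (2 * Δt) := by field_simp; ring
    linarith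
  have hsq : C' * C' < s / (2 * Δt) * (e / (2 * Δt)) := by
    have hl : Δt < Real.sqrt (s * e) / (2 * C') :=
      lt_of_lt_of_le hΔtlt (le_trans (min_le_right _ _) (min_le_right _ _))
    have h2c : Δt * (2 * C') < Real.sqrt (s * e) := (lt_div_iff₀ (by positivity)).mp hl
    have hsq2 : (Δt * (2 * C'))^2 < s * e := by
      have h' := pow_lt_pow_left₀ h2c (by positivity : (0:ℝ) ≤ Δt * (2 * C')) (two_ne_zero)
      rwa [Real.sq_sqrt (by positivity : (0:ℝ) ≤ s * e)] at h'
    rw [div_mul_div_comm, lt_div_iff₀ (by positivity)]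
    nlinarith
  have hdet : 0 < (s / Δt - a₁ Δt) * (e / Δt + e / T - b₂ Δt) - (-a₂ Δt) * (-b₁ Δt) := by
    have hprod : s / (2 * Δt) * (e / (2 * Δt)) ≤
        (s / Δt - a₁ Δt) * (e / Δt + e / T - b₂ Δt) :=
      mul_le_mul hA hB (by positivity) (le_trans (by positivity) hA)
    have hab : (-a₂ Δt) * (-b₁ Δt) ≤ C * C := by
      calc (-a₂ Δt) * (-b₁ Δt) ≤ |(-a₂ Δt) * (-b₁ Δt)| := le_abs_self _
        _ = |a₂ Δt| * |b₁ Δt| := by rw [abs_mul, abs_neg, abs_neg]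
        _ ≤ C * C := mul_le_mul h2 h3 (abs_nonneg _) hC0
    have hCC : C * C < C' * C' := by nlinarith
    linarith
  refine ⟨hdet, fun A₀ B₀ => ?_⟩
  set A : ℝ := s / Δt - a₁ Δt
  set B : ℝ := e / Δt + e / T - b₂ Δt
  set P : ℝ := -a₂ Δt
  set Q : ℝ := -b₁ Δt
  set D : ℝ := A * B - P * Q with hD
  have hDne : D ≠ 0 := ne_of_gt hdet
  refine ⟨((A₀ * B - P * B₀) / D, (A * B₀ - Q * A₀) / D), ⟨?_, ?_⟩, ?_⟩
  · field_simp
    ring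
  · field_simp
    ring
  · rintro ⟨x, y⟩ ⟨e1, e2⟩
    simp only at e1 e2
    have hx : x = (A₀ * B - P * B₀) / D := by
      field_simp
      linear_combination B * e1 - P * e2
    have hy : y = (A * B₀ - Q * A₀) / D := by
      field_simp
      linear_combination A * e2 - Q * e1
    simp [hx, hy]
end
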